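/- arXiv:2404.15916 — 4 statements merged into one kernel-verified Lean document; each statement's English description precedes it below -/
import Mathlib

section
/- For every positive integer k, any k-covering family has at least ⌊k²/4⌋ lists. Here a k-covering family is a collection L of strictly increasing lists of integers from [k] such that for all integers i, j with 1 ≤ i < j ≤ k, the integers i and j appear as consecutive members of some list in L. -/
/-- `L` is a `k`-covering family: a collection of strictly increasing lists of
integers from `{1, ..., k}` such that for all `1 ≤ i < j ≤ k`, the integers
`i` and `j` appear as consecutive members of some list in `L`. -/
def IsCoveringFamily (k : ℕ) (L : Finset (List ℕ)) : Prop :=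
  (∀ l ∈ L, l.Chain' (· < ·)) ∧
  (∀ l ∈ L, ∀ x ∈ l, 1 ≤ x ∧ x ≤ k) ∧
  (∀ i j : ℕ, 1 ≤ i → i < j → j ≤ k → ∃ l ∈ L, [i, j] <:+: l)

private lemma takeWhile_cross {t i j : ℕ} {u : List ℕ} :
    ∀ s : List ℕ, (s ++ i :: j :: u).Pairwise (· < ·) → i ≤ t → t < j →
      (s ++ i :: j :: u).takeWhile (fun x => decide (x ≤ t)) = s ++ [i]
  | [], hp, hi, hj => by
    simp [List.takeWhile, hi, Nat.not_le.mpr hj]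
  | a :: s, hp, hi, hj => by
    have ha : a < i := (List.pairwise_cons.mp hp).1 i (by simp)
    have hat : a ≤ t := le_trans (le_of_lt ha) hi
    rw [List.cons_append, List.takeWhile_cons]
    simp only [hat, decide_true]
    rw [takeWhile_cross s (List.pairwise_cons.mp hp).2 hi hj]
    simp

private lemma cross_unique {t : ℕ} {l : List ℕ} (hc : l.Chain' (· < ·))
    {i₁ j₁ i₂ j₂ : ℕ} (h₁ : [i₁, j₁] <:+: l) (h₂ : [i₂, j₂] <:+: l)
    (hi₁ : i₁ ≤ t) (hj₁ : t < j₁) (hi₂ : i₂ ≤ t) (hj₂ : t < j₂) :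
    i₁ = i₂ ∧ j₁ = j₂ := by
  have hp : l.Pairwise (· < ·) := List.isChain_iff_pairwise.mp hc
  obtain ⟨s₁, u₁, e₁⟩ := h₁
  obtain ⟨s₂, u₂, e₂⟩ := h₂
  simp only [List.append_assoc, List.cons_append, List.nil_append] at e₁ e₂
  have t₁ : l.takeWhile (fun x => decide (x ≤ t)) = s₁ ++ [i₁] := by
    rw [← e₁]; exact takeWhile_cross s₁ (e₁ ▸ hp) hi₁ hj₁
  have t₂ : l.takeWhile (fun x => decide (x ≤ t)) = s₂ ++ [i₂] := by
    rw [← e₂]; exact takeWhile_cross s₂ (e₂ ▸ hp) hi₂ hj₂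
  have hsi : s₁ = s₂ ∧ [i₁] = [i₂] :=
    List.append_inj' (t₁ ▸ t₂) rfl
  have hi : i₁ = i₂ := by simpa using hsi.2
  refine ⟨hi, ?_⟩
  have : s₁ ++ i₁ :: j₁ :: u₁ = s₁ ++ i₁ :: j₂ :: u₂ := by
    rw [e₁, hsi.1, hi, e₂]
  have h2 := List.append_cancel_left this
  simp only [List.cons.injEq, true_and] at h2
  exact h2.1

private lemma arith (k : ℕ) : k ^ 2 / 4 ≤ (k / 2) * (k - k / 2) := by
  obtain ⟨m, hm | hm⟩ : ∃ m, k = 2 * m ∨ k = 2 * m + 1 := ⟨k / 2, by omega⟩ <;> subst hm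
  · have h1 : (2 * m) ^ 2 = 4 * (m * m) := by ring
    have h2 : 2 * m / 2 = m := by omega
    have h3 : 2 * m - m = m := by omega
    rw [h1, h2, h3, Nat.mul_div_cancel_left _ (by norm_num)]
  · have h1 : (2 * m + 1) ^ 2 = 4 * (m * m + m) + 1 := by ring
    have h2 : (2 * m + 1) / 2 = m := by omega
    have h3 : 2 * m + 1 - m = m + 1 := by omega
    have h4 : (4 * (m * m + m) + 1) / 4 = m * m + m := by omega
    rw [h1, h2, h3, h4, Nat.mul_add, Nat.mul_one]

/-- Any `k`-covering family has at least `⌊k²/4⌋` lists. -/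
theorem covering_family_lower_bound (k : ℕ) (hk : 0 < k)
    (L : Finset (List ℕ)) (hL : IsCoveringFamily k L) :
    k ^ 2 / 4 ≤ L.card := by
  obtain ⟨hchain, hmem, hcov⟩ := hL
  set t : ℕ := k / 2 with ht
  set P : Finset (ℕ × ℕ) := (Finset.Icc 1 t) ×ˢ (Finset.Icc (t + 1) k) with hP
  have hPcard : P.card = t * (k - t) := by
    rw [hP, Finset.card_product, Nat.card_Icc, Nat.card_Icc]
    congr 1 <;> omega
  classical
  set f : ℕ × ℕ → List ℕ := fun p =>
    if h : ∃ l ∈ L, [p.1, p.2] <:+: l then h.choose else [] with hf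
  have hkey : ∀ p ∈ P, f p ∈ L ∧ [p.1, p.2] <:+: f p := by
    intro p hp
    rw [hP, Finset.mem_product, Finset.mem_Icc, Finset.mem_Icc] at hp
    have h : ∃ l ∈ L, [p.1, p.2] <:+: l := hcov p.1 p.2 hp.1.1 (by omega) hp.2.2
    simp only [hf, dif_pos h]
    exact ⟨h.choose_spec.1, h.choose_spec.2⟩
  have hcard : P.card ≤ L.card := by
    apply Finset.card_le_card_of_injOn f (fun p hp => (hkey p hp).1)
    intro p hp q hq hpq
    simp only [Finset.mem_coe] at hp hq
    have hp' := hp; have hq' := hq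
    rw [hP, Finset.mem_product, Finset.mem_Icc, Finset.mem_Icc] at hp' hq'
    have h1 := hkey p hp
    have h2 := hkey q hq
    rw [hpq] at h1
    have := cross_unique (hchain _ h2.1) h1.2 h2.2
      hp'.1.2 (by omega) hq'.1.2 (by omega)
    exact Prod.ext this.1 this.2
  calc k ^ 2 / 4 ≤ t * (k - t) := arith k
    _ = P.card := hPcard.symm
    _ ≤ L.card := hcard
end

section
/- For every positive integer k, there exists a k-covering family consisting of exactly ⌊k²/4⌋ lists. In particular, the minimum size λ(k) of a k-covering family equals ⌊k²/4⌋. -/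
namespace List

variable {α : Type*}

theorem Pairwise.notMem_Ioo_of_infix [Preorder α] {l : List α} (hl : l.Pairwise (· < ·))
    {a b x : α} (hab : [a, b] <:+: l) (hx : x ∈ l) : x ∉ Set.Ioo a b := by
  obtain ⟨s, u, rfl⟩ := hab
  rintro ⟨hax, hxb⟩
  simp only [append_assoc, cons_append, nil_append, pairwise_append, pairwise_cons,
    mem_cons] at hl
  simp only [append_assoc, cons_append, nil_append, mem_append, mem_cons] at hx
  rcases hx with hs | rfl | rfl | hu
  · exact lt_asymm hax (hl.2.2 x hs a (.inl rfl))
  · exact lt_irrefl x hax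
  · exact lt_irrefl x hxb
  · exact lt_asymm hxb (hl.2.1.2.1 x hu)

theorem Pairwise.eq_of_infix_of_le_lt [LinearOrder α] {l : List α} (hl : l.Pairwise (· < ·))
    {t a b a' b' : α} (h : [a, b] <:+: l) (h' : [a', b'] <:+: l)
    (ha : a ≤ t) (hb : t < b) (ha' : a' ≤ t) (hb' : t < b') : a = a' ∧ b = b' := by
  have mem : ∀ {x y : α}, [x, y] <:+: l → x ∈ l ∧ y ∈ l := fun h =>
    ⟨h.subset (by simp), h.subset (by simp)⟩
  have between : ∀ x ∈ l, x ∉ Set.Ioo a b := fun _ => hl.notMem_Ioo_of_infix h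
  have between' : ∀ x ∈ l, x ∉ Set.Ioo a' b' := fun _ => hl.notMem_Ioo_of_infix h'
  refine ⟨le_antisymm ?_ ?_, le_antisymm ?_ ?_⟩
  · exact not_lt.1 fun hlt => between' _ (mem h).1 ⟨hlt, ha.trans_lt hb'⟩
  · exact not_lt.1 fun hlt => between _ (mem h').1 ⟨hlt, ha'.trans_lt hb⟩
  · exact not_lt.1 fun hlt => between _ (mem h').2 ⟨ha.trans_lt hb', hlt⟩
  · exact not_lt.1 fun hlt => between' _ (mem h).2 ⟨ha'.trans_lt hb, hlt⟩

theorem pair_infix_range' {s n step m : ℕ} (hm : m + 1 < n) :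
    [s + step * m, s + step * (m + 1)] <:+: range' s n step := by
  induction m generalizing s n with
  | zero =>
    obtain ⟨n, rfl⟩ := Nat.exists_eq_add_of_le' hm
    exact ⟨[], range' (s + step + step) n step, by simp [range'_succ]⟩
  | succ m ih =>
    obtain ⟨n, rfl⟩ := Nat.exists_eq_add_of_le' (Nat.one_le_of_lt hm)
    rw [range'_succ, show s + step * (m + 1) = s + step + step * m by ring,
      show s + step * (m + 1 + 1) = s + step + step * (m + 1) by ring]
    exact infix_cons (ih (by omega))

end List

theorem Nat.div_two_mul_sub_div_two (k : ℕ) : k / 2 * (k - k / 2) = k ^ 2 / 4 := by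
  obtain ⟨m, rfl | rfl⟩ := k.even_or_odd'
  · have hsq : (2 * m) ^ 2 = 4 * (m * m) := by ring
    rw [hsq, show 2 * m / 2 = m by omega, show 2 * m - m = m by omega]
    omega
  · have hsq : (2 * m + 1) ^ 2 = 4 * (m * (m + 1)) + 1 := by ring
    rw [hsq, show (2 * m + 1) / 2 = m by omega, show 2 * m + 1 - m = m + 1 by omega]
    omega

theorem Nat.sum_Icc_div_two (k : ℕ) : ∑ b ∈ Finset.Icc 1 k, b / 2 = k ^ 2 / 4 := by
  induction k with
  | zero => simp
  | succ n ih =>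
    rw [Finset.sum_Icc_succ_top (by omega), ih]
    obtain ⟨m, rfl | rfl⟩ := n.even_or_odd'
    · have e1 : (2 * m) ^ 2 = 4 * (m * m) := by ring
      have e2 : (2 * m + 1) ^ 2 = 4 * (m * m) + 4 * m + 1 := by ring
      omega
    · have e1 : (2 * m + 1) ^ 2 = 4 * (m * m) + 4 * m + 1 := by ring
      have e2 : (2 * m + 1 + 1) ^ 2 = 4 * (m * m) + 8 * m + 4 := by ring
      omega

namespace IsCoveringFamily

variable {k : ℕ} {L : Finset (List ℕ)}

theorem mul_sub_le_card (hL : IsCoveringFamily k L) (t : ℕ) : t * (k - t) ≤ L.card := by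
  have hcard : (Finset.Icc 1 t ×ˢ Finset.Icc (t + 1) k).card = t * (k - t) := by simp
  rw [← hcard]
  refine Finset.card_le_card_of_forall_subsingleton (fun p l => [p.1, p.2] <:+: l) ?_ ?_
  · rintro ⟨i, j⟩ hp
    simp only [Finset.mem_product, Finset.mem_Icc] at hp
    exact hL.2.2 i j hp.1.1 (by omega) hp.2.2
  · rintro l hl ⟨i, j⟩ ⟨hp, hij⟩ ⟨i', j'⟩ ⟨hp', hij'⟩
    simp only [Finset.mem_product, Finset.mem_Icc] at hp hp'
    obtain ⟨rfl, rfl⟩ := (List.isChain_iff_pairwise.1 (hL.1 l hl)).eq_of_infix_of_le_lt hij hij'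
      hp.1.2 (by omega) hp'.1.2 (by omega)
    rfl

theorem sq_div_four_le_card (hL : IsCoveringFamily k L) : k ^ 2 / 4 ≤ L.card :=
  Nat.div_two_mul_sub_div_two k ▸ hL.mul_sub_le_card (k / 2)

end IsCoveringFamily

def apList (k a d : ℕ) : List ℕ := List.range' a ((k - a) / d + 1) d

theorem isChain_apList {k a d : ℕ} (hd : 0 < d) : (apList k a d).IsChain (· < ·) :=
  List.isChain_iff_pairwise.2 (List.pairwise_lt_range' _ hd)

theorem mem_apList {k a d x : ℕ} (ha : a ≤ k) (hx : x ∈ apList k a d) : a ≤ x ∧ x ≤ k := by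
  obtain ⟨m, hm, rfl⟩ := List.mem_range'.1 hx
  have : d * m ≤ k - a :=
    (Nat.mul_le_mul_left d (Nat.lt_succ_iff.1 hm)).trans (Nat.mul_div_le _ _)
  omega

theorem pair_infix_apList {k a d i : ℕ} (hd : 0 < d) (hai : a ≤ i) (hdvd : d ∣ i - a)
    (hik : i + d ≤ k) : [i, i + d] <:+: apList k a d := by
  obtain ⟨m, hm⟩ := hdvd
  have hi : i = a + d * m := by omega
  have hlen : m + 1 ≤ (k - a) / d :=
    (Nat.le_div_iff_mul_le hd).2 (by rw [Nat.add_mul, one_mul, Nat.mul_comm]; omega)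
  have hpair : [i, i + d] = [a + d * m, a + d * (m + 1)] := by
    rw [hi, Nat.mul_succ, Nat.add_assoc]
  rw [hpair]
  exact List.pair_infix_range' (by omega)

/-- The pair `⟨b, a⟩` stands for the progression with first term `a` and second term `b`, i.e.
difference `d = b - a`; the constraints `2 * a ≤ b ≤ k` are `a ≤ min d (k - d)`. -/
def apIndex (k : ℕ) : Finset (Σ _ : ℕ, ℕ) :=
  (Finset.Icc 1 k).sigma fun b => Finset.Icc 1 (b / 2)

def apFamily (k : ℕ) : Finset (List ℕ) :=
  (apIndex k).image fun p => apList k p.2 (p.1 - p.2)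

theorem mem_apIndex {k : ℕ} {p : Σ _ : ℕ, ℕ} :
    p ∈ apIndex k ↔ 1 ≤ p.2 ∧ 2 * p.2 ≤ p.1 ∧ p.1 ≤ k := by
  simp only [apIndex, Finset.mem_sigma, Finset.mem_Icc, Nat.le_div_iff_mul_le two_pos]
  omega

theorem card_apFamily_le (k : ℕ) : (apFamily k).card ≤ k ^ 2 / 4 := by
  have hcard : (apIndex k).card = k ^ 2 / 4 := by
    simp [apIndex, Nat.sum_Icc_div_two]
  exact hcard ▸ Finset.card_image_le

theorem exists_pair_infix_apFamily {k i d : ℕ} (hi : 1 ≤ i) (hd : 0 < d) (hik : i + d ≤ k) :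
    ∃ l ∈ apFamily k, [i, i + d] <:+: l := by
  obtain ⟨a, ha⟩ : ∃ a, a = (i - 1) % d + 1 := ⟨_, rfl⟩
  have hmod : (i - 1) % d < d := Nat.mod_lt _ hd
  have hmod_le : (i - 1) % d ≤ i - 1 := Nat.mod_le _ _
  have hdvd : d ∣ i - a := ⟨(i - 1) / d, by have := Nat.div_add_mod (i - 1) d; omega⟩
  refine ⟨apList k a d, Finset.mem_image.2 ⟨⟨a + d, a⟩, mem_apIndex.2 ?_, by simp⟩, ?_⟩
  · dsimp only
    omega
  · exact pair_infix_apList hd (by omega) hdvd hik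

theorem isCoveringFamily_apFamily (k : ℕ) : IsCoveringFamily k (apFamily k) := by
  refine ⟨?_, ?_, fun i j hi hij hjk => ?_⟩
  · simp only [apFamily, Finset.forall_mem_image, mem_apIndex]
    exact fun p hp => isChain_apList (by omega)
  · simp only [apFamily, Finset.forall_mem_image, mem_apIndex]
    exact fun p hp x hx => by have := mem_apList (by omega) hx; omega
  · obtain ⟨d, rfl⟩ := Nat.exists_eq_add_of_lt hij
    simpa only [Nat.add_assoc] using
      exists_pair_infix_apFamily (d := d + 1) hi (Nat.succ_pos d) (by omega)

theorem covering_family_min_size_general (k : ℕ) :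
    (∃ L : Finset (List ℕ), IsCoveringFamily k L ∧ L.card = k ^ 2 / 4) ∧
    IsLeast {n : ℕ | ∃ L : Finset (List ℕ), IsCoveringFamily k L ∧ L.card = n}
      (k ^ 2 / 4) := by
  have hcov := isCoveringFamily_apFamily k
  have hcard : (apFamily k).card = k ^ 2 / 4 :=
    (card_apFamily_le k).antisymm hcov.sq_div_four_le_card
  refine ⟨⟨_, hcov, hcard⟩, ⟨_, hcov, hcard⟩, ?_⟩
  rintro n ⟨L, hL, rfl⟩
  exact hL.sq_div_four_le_card

/-- There is a `k`-covering family of exactly `⌊k²/4⌋` lists; in particular the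
minimum possible size `λ(k)` of a `k`-covering family equals `⌊k²/4⌋`. -/
theorem covering_family_min_size (k : ℕ) (hk : 0 < k) :
    (∃ L : Finset (List ℕ), IsCoveringFamily k L ∧ L.card = k ^ 2 / 4) ∧
    IsLeast {n : ℕ | ∃ L : Finset (List ℕ), IsCoveringFamily k L ∧ L.card = n}
      (k ^ 2 / 4) :=
  covering_family_min_size_general k
end

section
/- For every pair (i,j) with 1 ≤ i < j ≤ k, if d = j − i and a is the unique integer in [d] with a ≡ i (mod d), then a ≤ min(d, k−d), and i and j appear as consecutive elements of the arithmetic progression list starting at a with common difference d restricted to [k]. -/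
/-- For `1 ≤ i < j ≤ k`, with `d = j - i` and `a` the (unique) integer in `[d]`
with `a ≡ i (mod d)`, we have `a ≤ min d (k - d)`, and `i` and `j` appear as
consecutive elements of the arithmetic-progression list starting at `a` with
common difference `d` (restricted to `[k]`). -/
theorem covering_construction_covers (k i j d a : ℕ)
    (hi : 1 ≤ i) (hij : i < j) (hjk : j ≤ k)
    (hd : d = j - i) (ha1 : 1 ≤ a) (had : a ≤ d) (hmod : a % d = i % d) :
    a ≤ min d (k - d) ∧ ∃ m : ℕ, i = a + m * d ∧ j = a + (m + 1) * d := by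
  have hd1 : 1 ≤ d := by omega
  have hai : a ≤ i := by
    rcases eq_or_lt_of_le had with h | h
    · subst h
      have h0 : i % a = 0 := by rw [← hmod, Nat.mod_self]
      have : a ∣ i := Nat.dvd_of_mod_eq_zero h0
      exact Nat.le_of_dvd hi this
    · have h1 : a % d = a := Nat.mod_eq_of_lt h
      have h2 := Nat.mod_le i d
      omega
  have hdvd : d ∣ (i - a) := by
    have : a ≡ i [MOD d] := hmod
    exact (Nat.modEq_iff_dvd' hai).mp this
  obtain ⟨m, hm⟩ := hdvd
  rw [mul_comm] at hm
  refine ⟨by omega, m, by omega, by rw [add_mul, one_mul]; omega⟩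
end

section
/- In an undirected graph with positive edge weights, if vertices a, b, c appear in that order on some shortest path, then on any shortest path passing through all three of these vertices, b appears between a and c. -/
/-- A graph with real edge weights that are strictly positive on edges. -/
structure WeightedGraph (V : Type*) where
  Adj : V → V → Prop
  w : V → V → ℝ
  pos : ∀ {u v : V}, Adj u v → 0 < w u v

namespace WeightedGraph

variable {V : Type*} (G : WeightedGraph V)

/-- The graph is undirected: adjacency and weights are symmetric. -/
def IsUndirected : Prop :=
  (∀ u v, G.Adj u v → G.Adj v u) ∧ (∀ u v, G.w u v = G.w v u)

/-- Total weight of a vertex sequence (sum of weights of consecutive pairs). -/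
def weight (l : List V) : ℝ :=
  ((l.zip l.tail).map fun p => G.w p.1 p.2).sum

/-- A (simple) path: a nonempty sequence of distinct vertices with consecutive
vertices adjacent. -/
def IsPath (l : List V) : Prop :=
  l ≠ [] ∧ l.Chain' G.Adj ∧ l.Nodup

/-- A path beginning at `u` and ending at `v`. -/
def IsPathFrom (l : List V) (u v : V) : Prop :=
  G.IsPath l ∧ l.head? = some u ∧ l.getLast? = some v

/-- A shortest path between its endpoints: a path whose total weight is at most
that of any path with the same endpoints. -/
def IsShortest (l : List V) : Prop :=
  G.IsPath l ∧ ∀ l', G.IsPath l' → l'.head? = l.head? → l'.getLast? = l.getLast? →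
    G.weight l ≤ G.weight l'

/-- Weighted graph distance from `u` to `v`. -/
noncomputable def dist (u v : V) : ℝ :=
  sInf {c : ℝ | ∃ l, G.IsPathFrom l u v ∧ G.weight l = c}

end WeightedGraph

/-- `v` is the first vertex of `P` lying in the set `S`. -/
def FirstIn {V : Type*} (P : List V) (S : Set V) (v : V) : Prop :=
  v ∈ S ∧ ∃ pre post : List V, P = pre ++ v :: post ∧ ∀ x ∈ pre, x ∉ S

/-- `v` is the last vertex of `P` lying in the set `S`. -/
def LastIn {V : Type*} (P : List V) (S : Set V) (v : V) : Prop :=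
  v ∈ S ∧ ∃ pre post : List V, P = pre ++ v :: post ∧ ∀ x ∈ post, x ∉ S

/-!
A segment of a shortest path is itself shortest: a shorter path between its ends could be
spliced in, and the resulting walk shortened to a path by cutting out cycles. Hence distances add
up along a shortest path, `d(x, z) = d(x, y) + d(y, z)` for `x, y, z` in this order, and
`d(x, y) > 0` for `x ≠ y`. Now `P` gives `d(a, c) = d(a, b) + d(b, c)`. If `a` lay between `b`
and `c` on `Q`, then `d(b, c) = d(b, a) + d(a, c) = 2 d(a, b) + d(b, c)` (the distance is
symmetric in an undirected graph), which is absurd; likewise if `c` lay between `a` and `b`.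
-/

namespace List

variable {α : Type*}

theorem exists_eq_append_cons_of_cons_sublist {a : α} {l l' : List α} (h : a :: l <+ l') :
    ∃ s t, l' = s ++ a :: t ∧ l <+ t := by
  obtain ⟨r₁, r₂, rfl, ha, hl⟩ := cons_sublist_iff.mp h
  obtain ⟨s, t, rfl⟩ := append_of_mem ha
  exact ⟨s, t ++ r₂, by simp, hl.trans (sublist_append_right t r₂)⟩

theorem pair_sublist_or_pair_sublist {x y : α} {l : List α} (hx : x ∈ l) (hy : y ∈ l)
    (hxy : x ≠ y) : [x, y] <+ l ∨ [y, x] <+ l := by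
  induction l with
  | nil => simp at hx
  | cons a t ih =>
    rcases mem_cons.mp hx with rfl | hxt
    · exact .inl ((singleton_sublist.mpr ((mem_cons.mp hy).resolve_left hxy.symm)).cons_cons _)
    rcases mem_cons.mp hy with rfl | hyt
    · exact .inr ((singleton_sublist.mpr hxt).cons_cons _)
    exact (ih hxt hyt).imp (·.cons a) (·.cons a)

theorem Nodup.triple_sublist {x y z : α} {l : List α} (hl : l.Nodup) (hxy : [x, y] <+ l)
    (hyz : [y, z] <+ l) : [x, y, z] <+ l := by
  induction l with
  | nil => simp at hxy
  | cons a t ih =>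
    obtain ⟨ha, ht⟩ := nodup_cons.mp hl
    have hyt : y ∈ t := hxy.tail.subset (mem_singleton_self y)
    have hyz' : [y, z] <+ t := (sublist_cons_iff.mp hyz).resolve_right <| by
      rintro ⟨r, hr, -⟩
      exact ha ((cons_eq_cons.mp hr).1 ▸ hyt)
    rcases sublist_cons_iff.mp hxy with hxy' | ⟨r, hr, -⟩
    · exact (ih ht hxy' hyz').cons a
    · obtain ⟨rfl, -⟩ := cons_eq_cons.mp hr
      exact hyz'.cons_cons x

theorem Nodup.triple_sublist_cases {x y z : α} {l : List α} (hl : l.Nodup)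
    (hxyz : [x, y, z].Nodup) (hx : x ∈ l) (hy : y ∈ l) (hz : z ∈ l) :
    [x, y, z] <+ l ∨ [z, y, x] <+ l ∨ [y, x, z] <+ l ∨ [z, x, y] <+ l ∨
      [x, z, y] <+ l ∨ [y, z, x] <+ l := by
  simp only [nodup_cons, mem_cons, not_mem_nil, or_false, not_or] at hxyz
  obtain ⟨⟨hxy, hxz⟩, hyz, -⟩ := hxyz
  rcases pair_sublist_or_pair_sublist hx hy hxy with h₁ | h₁ <;>
  rcases pair_sublist_or_pair_sublist hy hz hyz with h₂ | h₂ <;>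
  rcases pair_sublist_or_pair_sublist hx hz hxz with h₃ | h₃
  all_goals grind [Nodup.triple_sublist]

theorem IsChain.append_append_of_head?_getLast? {R : α → α → Prop} {pre s s' post : List α}
    (h : IsChain R (pre ++ s ++ post)) (hs' : IsChain R s') (hh : s'.head? = s.head?)
    (ht : s'.getLast? = s.getLast?) : IsChain R (pre ++ s' ++ post) := by
  simp only [isChain_append, getLast?_append, hh, ht] at h ⊢
  tauto

end List

namespace WeightedGraph

variable {V : Type*} (G : WeightedGraph V)

@[simp]
theorem weight_singleton (x : V) : G.weight [x] = 0 := rfl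

theorem weight_cons_cons (x y : V) (l : List V) :
    G.weight (x :: y :: l) = G.w x y + G.weight (y :: l) := rfl

theorem weight_append_cons (l₁ : List V) (x : V) (l₂ : List V) :
    G.weight (l₁ ++ x :: l₂) = G.weight (l₁ ++ [x]) + G.weight (x :: l₂) := by
  induction l₁ with
  | nil => simp [weight]
  | cons a t ih =>
    cases t with
    | nil => simp [weight]
    | cons b t => simp only [List.cons_append, weight_cons_cons] at ih ⊢; rw [ih]; ring

theorem weight_append_append {pre s post : List V} {x y : V} (hx : s.head? = some x)
    (hy : s.getLast? = some y) :
    G.weight (pre ++ s ++ post) = G.weight (pre ++ [x]) + G.weight s + G.weight (y :: post) := by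
  obtain ⟨s', rfl⟩ : ∃ s', s = x :: s' := by
    cases s with
    | nil => simp at hx
    | cons a s' => exact ⟨s', by simpa using hx⟩
  obtain ⟨s'', hs''⟩ : ∃ s'', x :: s' = s'' ++ [y] := by
    obtain ⟨s'', y', h⟩ := (x :: s').eq_nil_or_concat.resolve_left (List.cons_ne_nil x s')
    rw [h, List.concat_eq_append, List.getLast?_concat] at hy
    exact ⟨s'', by rw [h, ← Option.some_inj.mp hy, List.concat_eq_append]⟩
  rw [List.append_assoc, List.cons_append, weight_append_cons, ← List.cons_append, hs'',
    List.append_assoc, List.singleton_append, G.weight_append_cons s'', add_assoc]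

theorem weight_nonneg {l : List V} (h : l.IsChain G.Adj) : 0 ≤ G.weight l := by
  induction l with
  | nil => exact le_rfl
  | cons x t ih =>
    cases t with
    | nil => exact (G.weight_singleton x).ge
    | cons y t =>
      rw [List.isChain_cons_cons] at h
      rw [weight_cons_cons]
      exact add_nonneg (G.pos h.1).le (ih h.2)

theorem weight_cons_pos {x : V} {l : List V} (h : (x :: l).IsChain G.Adj) (hl : l ≠ []) :
    0 < G.weight (x :: l) := by
  obtain ⟨y, t, rfl⟩ := List.exists_cons_of_ne_nil hl
  rw [List.isChain_cons_cons] at h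
  rw [weight_cons_cons]
  exact add_pos_of_pos_of_nonneg (G.pos h.1) (G.weight_nonneg h.2)

theorem weight_reverse (hw : ∀ u v, G.w u v = G.w v u) (l : List V) :
    G.weight l.reverse = G.weight l := by
  induction l with
  | nil => rfl
  | cons x t ih =>
    cases t with
    | nil => rfl
    | cons y t =>
      rw [List.reverse_cons, List.reverse_cons, List.append_assoc, List.singleton_append,
        G.weight_append_cons t.reverse, ← List.reverse_cons, ih, weight_cons_cons,
        weight_cons_cons, weight_singleton, hw, add_zero, add_comm]

section Paths

variable {G}

theorem IsPath.isChain {l : List V} (h : G.IsPath l) : l.IsChain G.Adj := h.2.1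

theorem IsPath.nodup {l : List V} (h : G.IsPath l) : l.Nodup := h.2.2

theorem IsPath.infix {l s : List V} (h : G.IsPath l) (hs : s <:+: l) (hne : s ≠ []) :
    G.IsPath s :=
  ⟨hne, h.isChain.infix hs, hs.sublist.nodup h.nodup⟩

theorem IsPath.reverse (hadj : ∀ u v, G.Adj u v → G.Adj v u) {l : List V} (h : G.IsPath l) :
    G.IsPath l.reverse :=
  ⟨by simpa using h.1, List.isChain_reverse.mpr (h.isChain.imp fun u v => hadj u v),
    List.nodup_reverse.mpr h.nodup⟩

theorem IsPathFrom.reverse (hadj : ∀ u v, G.Adj u v → G.Adj v u) {l : List V} {u v : V}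
    (h : G.IsPathFrom l u v) : G.IsPathFrom l.reverse v u :=
  ⟨h.1.reverse hadj, by simp [h.2.2], by simp [h.2.1]⟩

theorem exists_isPath_weight_le {l : List V} (hl : l.IsChain G.Adj) (hne : l ≠ []) :
    ∃ p, G.IsPath p ∧ p.head? = l.head? ∧ p.getLast? = l.getLast? ∧
      G.weight p ≤ G.weight l := by
  induction hn : l.length using Nat.strong_induction_on generalizing l with
  | _ n ih =>
  by_cases hnd : l.Nodup
  · exact ⟨l, ⟨hne, hl, hnd⟩, rfl, rfl, le_rfl⟩
  obtain ⟨x, hx⟩ : ∃ x, [x, x].Sublist l := by simpa [List.nodup_iff_sublist] using hnd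
  obtain ⟨pre, t, rfl, hxt⟩ := List.exists_eq_append_cons_of_cons_sublist hx
  obtain ⟨mid, post, rfl⟩ := List.append_of_mem (List.singleton_sublist.mp hxt)
  have hsplit : pre ++ x :: (mid ++ x :: post) = pre ++ (x :: mid ++ [x]) ++ post := by simp
  rw [hsplit] at hl hn ⊢
  have hshort : (pre ++ [x] ++ post).IsChain G.Adj :=
    hl.append_append_of_head?_getLast? (List.isChain_singleton x) rfl List.getLast?_concat.symm
  obtain ⟨p, hp, hph, hpl, hpw⟩ := ih _ (by simp at hn ⊢; omega) hshort (by simp) rfl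
  refine ⟨p, hp, by simp [hph], ?_, hpw.trans ?_⟩
  · simp only [hpl, List.getLast?_append, List.getLast?_singleton, Option.some_or]
  have hcycle := G.weight_nonneg (hl.infix ⟨pre, post, rfl⟩)
  rw [G.weight_append_append (s := [x]) (x := x) (y := x) rfl rfl,
    G.weight_append_append rfl List.getLast?_concat]
  simp only [weight_singleton]
  linarith

theorem IsShortest.infix {l s : List V} (hl : G.IsShortest l) (hs : s <:+: l) (hne : s ≠ []) :
    G.IsShortest s := by
  refine ⟨hl.1.infix hs hne, fun l' hl' hh ht => ?_⟩
  obtain ⟨pre, post, rfl⟩ := hs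
  obtain ⟨x, s', rfl⟩ := List.exists_cons_of_ne_nil hne
  obtain ⟨y, hy⟩ : ∃ y, (x :: s').getLast? = some y := ⟨_, List.getLast?_eq_some_getLast hne⟩
  have hwalk := hl.1.isChain.append_append_of_head?_getLast? hl'.isChain hh ht
  obtain ⟨p, hp, hph, hpl, hpw⟩ := G.exists_isPath_weight_le hwalk (by simp [hl'.1])
  have hle := hl.2 p hp (by simp only [hph, List.head?_append, hh])
    (by simp only [hpl, List.getLast?_append, ht])
  rw [G.weight_append_append rfl hy] at hle
  rw [G.weight_append_append hh (ht.trans hy)] at hpw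
  linarith

theorem IsShortest.dist_eq_weight {l : List V} {x y : V} (hl : G.IsShortest l)
    (hx : l.head? = some x) (hy : l.getLast? = some y) : G.dist x y = G.weight l := by
  refine IsLeast.csInf_eq ⟨⟨l, ⟨hl.1, hx, hy⟩, rfl⟩, ?_⟩
  rintro _ ⟨l', ⟨hl', hx', hy'⟩, rfl⟩
  exact hl.2 l' hl' (hx'.trans hx.symm) (hy'.trans hy.symm)

theorem IsShortest.dist_eq_weight_of_eq_append {l pre mid post : List V} {x y : V}
    (hl : G.IsShortest l) (h : l = pre ++ x :: (mid ++ y :: post)) :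
    G.dist x y = G.weight (x :: mid ++ [y]) :=
  (hl.infix ⟨pre, post, by simp [h]⟩ (by simp)).dist_eq_weight rfl List.getLast?_concat

theorem IsShortest.dist_add_dist {l : List V} {x y z : V} (hl : G.IsShortest l)
    (h : [x, y, z].Sublist l) : G.dist x y + G.dist y z = G.dist x z := by
  obtain ⟨A, t, rfl, hyz⟩ := List.exists_eq_append_cons_of_cons_sublist h
  obtain ⟨B, t, rfl, hz⟩ := List.exists_eq_append_cons_of_cons_sublist hyz
  obtain ⟨C, D, rfl⟩ := List.append_of_mem (List.singleton_sublist.mp hz)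
  rw [hl.dist_eq_weight_of_eq_append (pre := A) (mid := B) rfl,
    hl.dist_eq_weight_of_eq_append (pre := A ++ x :: B) (mid := C) (post := D) (by simp),
    hl.dist_eq_weight_of_eq_append (pre := A) (mid := B ++ y :: C) (post := D) (by simp),
    show x :: (B ++ y :: C) ++ [z] = x :: B ++ y :: (C ++ [z]) by simp,
    G.weight_append_cons (x :: B) y (C ++ [z])]
  rfl

theorem IsShortest.dist_pos {l : List V} {x y : V} (hl : G.IsShortest l) (h : [x, y].Sublist l) :
    0 < G.dist x y := by
  obtain ⟨A, t, rfl, hy⟩ := List.exists_eq_append_cons_of_cons_sublist h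
  obtain ⟨B, C, rfl⟩ := List.append_of_mem (List.singleton_sublist.mp hy)
  rw [hl.dist_eq_weight_of_eq_append rfl]
  exact G.weight_cons_pos (hl.1.isChain.infix ⟨A, C, by simp⟩) (by simp)

end Paths

theorem dist_comm (hG : G.IsUndirected) (u v : V) : G.dist u v = G.dist v u := by
  have key : ∀ u v, {c | ∃ l, G.IsPathFrom l u v ∧ G.weight l = c} ⊆
      {c | ∃ l, G.IsPathFrom l v u ∧ G.weight l = c} := by
    rintro u v _ ⟨l, hl, rfl⟩
    exact ⟨l.reverse, hl.reverse hG.1, G.weight_reverse hG.2 l⟩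
  exact congrArg sInf ((key u v).antisymm (key v u))

end WeightedGraph

/-- Shortest path orderings: in an undirected positively-weighted graph, if `a`, `b`,
`c` appear in that order on some shortest path `P`, then on any shortest path `Q`
through all three of these vertices, `b` appears between `a` and `c`. -/
theorem shortest_path_orderings {V : Type*} (G : WeightedGraph V)
    (hG : G.IsUndirected) (P Q : List V) (a b c : V)
    (hP : G.IsShortest P) (habc : List.Sublist [a, b, c] P)
    (hQ : G.IsShortest Q) (haQ : a ∈ Q) (hbQ : b ∈ Q) (hcQ : c ∈ Q) :
    List.Sublist [a, b, c] Q ∨ List.Sublist [c, b, a] Q := by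
  have hsum := hP.dist_add_dist habc
  have hab := hP.dist_pos ((by simp : [a, b].Sublist [a, b, c]).trans habc)
  have hbc := hP.dist_pos ((by simp : [b, c].Sublist [a, b, c]).trans habc)
  have hba := G.dist_comm hG a b
  have hcb := G.dist_comm hG b c
  have hca := G.dist_comm hG a c
  rcases hQ.1.nodup.triple_sublist_cases (habc.nodup hP.1.nodup) haQ hbQ hcQ with
    h | h | h | h | h | h
  · exact .inl h
  · exact .inr h
  all_goals linarith [hQ.dist_add_dist h]
end
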